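/- Let M ⊂ ℝ^m be nonempty compact, P a probability measure on ℝ^m with s(P) := E[dist(X,M)²] < ∞, (y_i) i.i.d. from P, and (Z_k) nonempty finite subsets of M with d_H(Z_k, M) → 0. Then almost surely, for every ε > 0 there exist N, K such that for all n ≥ N and k ≥ K, |(1/n) Σ_{i=1}^n min_{z∈Z_k} ‖y_i − z‖² − s(P)| < ε (i.e., GD²(Y_n, Z_k) → s(P) in the joint limit almost surely). -/

import Mathlib

open MeasureTheory Filter

/-!
Write `f = dist(·, M)`. Since `Z_k ⊆ M` is `h_k := d_H(Z_k, M)`-dense in `M`, pointwise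
`f² ≤ dist(·, Z_k)² ≤ (f + h_k)² ≤ (1 + h_k) f² + h_k (1 + h_k)`, the last step by
`2 f ≤ f² + 1`.
Averaging over the sample, `GD²(Y_n, Z_k)` is squeezed between `A_n` and
`(1 + h_k) A_n + h_k (1 + h_k)`, where `A_n` is the empirical mean of `f²`. By the strong law
`A_n → s(P)` almost surely, and `h_k → 0`, so both bounds tend to `s(P)` jointly in `(n, k)`.
-/

open Metric in
theorem sq_infDist_le_of_subset {α : Type*} [PseudoMetricSpace α] {s t : Set α} (x : α)
    (hts : t ⊆ s) (ht : t.Nonempty) (hs : Bornology.IsBounded s) :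
    infDist x t ^ 2 ≤ (1 + hausdorffDist t s) * infDist x s ^ 2
      + hausdorffDist t s * (1 + hausdorffDist t s) := by
  have hfin : hausdorffEDist s t ≠ ⊤ :=
    hausdorffEDist_ne_top_of_nonempty_of_bounded (ht.mono hts) ht hs (hs.subset hts)
  have hle : infDist x t ≤ infDist x s + hausdorffDist t s := by
    simpa only [hausdorffDist_comm] using infDist_le_infDist_add_hausdorffDist (x := x) hfin
  nlinarith [sq_nonneg (infDist x s - 1), infDist_nonneg (x := x) (s := s),
    infDist_nonneg (x := x) (s := t), hausdorffDist_nonneg (s := t) (t := s)]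

theorem average_le_mul_average_add {u v : ℕ → ℝ} {a b : ℝ} (hb : 0 ≤ b)
    (h : ∀ i, u i ≤ a * v i + b) (n : ℕ) :
    (1 / (n : ℝ)) * ∑ i ∈ Finset.range n, u i
      ≤ a * ((1 / (n : ℝ)) * ∑ i ∈ Finset.range n, v i) + b := by
  rcases Nat.eq_zero_or_pos n with rfl | hn
  · simpa using hb
  have hn' : (n : ℝ) ≠ 0 := by positivity
  calc (1 / (n : ℝ)) * ∑ i ∈ Finset.range n, u i
      ≤ (1 / (n : ℝ)) * ∑ i ∈ Finset.range n, (a * v i + b) := by gcongr with i; exact h i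
    _ = a * ((1 / (n : ℝ)) * ∑ i ∈ Finset.range n, v i) + b := by
      rw [Finset.sum_add_distrib, ← Finset.mul_sum, Finset.sum_const, Finset.card_range,
        nsmul_eq_mul]
      field_simp

theorem tendsto_prod_of_le_of_le_affine {ι κ : Type*} {l : Filter ι} {l' : Filter κ}
    {A : ι → ℝ} {c : κ → ℝ} {B : ι → κ → ℝ} {S : ℝ}
    (hA : Tendsto A l (nhds S)) (hc : Tendsto c l' (nhds 0))
    (hlow : ∀ n k, A n ≤ B n k) (hup : ∀ n k, B n k ≤ (1 + c k) * A n + c k * (1 + c k)) :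
    Tendsto (fun p : ι × κ => B p.1 p.2) (l ×ˢ l') (nhds S) := by
  have hA' : Tendsto (fun p : ι × κ => A p.1) (l ×ˢ l') (nhds S) := hA.comp tendsto_fst
  have hc' : Tendsto (fun p : ι × κ => c p.2) (l ×ˢ l') (nhds 0) := hc.comp tendsto_snd
  have hupper : Tendsto (fun p : ι × κ => (1 + c p.2) * A p.1 + c p.2 * (1 + c p.2))
      (l ×ˢ l') (nhds ((1 + 0) * S + 0 * (1 + 0))) :=
    ((tendsto_const_nhds.add hc').mul hA').add (hc'.mul (tendsto_const_nhds.add hc'))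
  rw [add_zero, one_mul, zero_mul, add_zero] at hupper
  exact tendsto_of_tendsto_of_tendsto_of_le_of_le hA' hupper (fun p => hlow _ _)
    (fun p => hup _ _)

theorem ae_tendsto_average_comp {Ω E : Type*} [MeasurableSpace Ω] [MeasurableSpace E]
    {μ : Measure Ω} {P : Measure E} {y : ℕ → Ω → E} (hmeas : ∀ i, Measurable (y i))
    (hindep : ProbabilityTheory.iIndepFun y μ) (hlaw : ∀ i, Measure.map (y i) μ = P)
    {φ : E → ℝ} (hφ : Measurable φ) (hint : Integrable φ P) :
    ∀ᵐ ω ∂μ, Tendsto (fun n : ℕ => (1 / (n : ℝ)) * ∑ i ∈ Finset.range n, φ (y i ω))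
      atTop (nhds (∫ x, φ x ∂P)) := by
  have hident : ∀ i, ProbabilityTheory.IdentDistrib (y i) (y 0) μ μ := fun i =>
    ⟨(hmeas i).aemeasurable, (hmeas 0).aemeasurable, by rw [hlaw i, hlaw 0]⟩
  rw [← hlaw 0] at hint ⊢
  have hint0 : Integrable (fun ω => φ (y 0 ω)) μ :=
    (integrable_map_measure hφ.aestronglyMeasurable (hmeas 0).aemeasurable).mp hint
  filter_upwards [ProbabilityTheory.strong_law_ae_real (fun i ω => φ (y i ω)) hint0
    (fun i j hij => (hindep.indepFun hij).comp hφ hφ) (fun i => (hident i).comp hφ)] with ω hω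
  rw [integral_map (hmeas 0).aemeasurable hφ.aestronglyMeasurable]
  simpa only [one_div_mul_eq_div] using hω

theorem stmt7_general {m : ℕ} (M : Set (EuclideanSpace ℝ (Fin m))) (hM : IsCompact M)
    {Ω : Type*} [MeasurableSpace Ω] (μ : Measure Ω)
    (P : Measure (EuclideanSpace ℝ (Fin m)))
    (y : ℕ → Ω → EuclideanSpace ℝ (Fin m))
    (hmeas : ∀ i, Measurable (y i))
    (hindep : ProbabilityTheory.iIndepFun y μ)
    (hlaw : ∀ i, Measure.map (y i) μ = P)
    (hint : Integrable (fun x => Metric.infDist x M ^ 2) P)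
    (Z : ℕ → Set (EuclideanSpace ℝ (Fin m)))
    (hZsub : ∀ k, Z k ⊆ M) (hZne : ∀ k, (Z k).Nonempty)
    (hconv : Tendsto (fun k => Metric.hausdorffDist (Z k) M) atTop (nhds 0)) :
    ∀ᵐ ω ∂μ, ∀ ε > 0, ∃ N K : ℕ, ∀ n ≥ N, ∀ k ≥ K,
      |(1 / (n : ℝ)) * ∑ i ∈ Finset.range n, Metric.infDist (y i ω) (Z k) ^ 2
        - ∫ x, Metric.infDist x M ^ 2 ∂P| < ε := by
  have hφ : Measurable fun x => Metric.infDist x M ^ 2 :=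
    ((Metric.continuous_infDist_pt M).pow 2).measurable
  have hlow : ∀ k x, Metric.infDist x M ^ 2 ≤ Metric.infDist x (Z k) ^ 2 := fun k x =>
    pow_le_pow_left₀ Metric.infDist_nonneg
      (Metric.infDist_le_infDist_of_subset (hZsub k) (hZne k)) 2
  have hh : ∀ k, 0 ≤ Metric.hausdorffDist (Z k) M := fun _ => Metric.hausdorffDist_nonneg
  filter_upwards [ae_tendsto_average_comp hmeas hindep hlaw hφ hint] with ω hω
  have hjoint := tendsto_prod_of_le_of_le_affine hω hconv
    (fun n k => mul_le_mul_of_nonneg_left (Finset.sum_le_sum fun i _ => hlow k _)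
      (by positivity))
    (fun n k => average_le_mul_average_add (by have := hh k; positivity)
      (fun i => sq_infDist_le_of_subset _ (hZsub k) (hZne k) hM.isBounded) n)
  rw [prod_atTop_atTop_eq] at hjoint
  intro ε hε
  obtain ⟨⟨N, K⟩, hNK⟩ := Metric.tendsto_atTop.mp hjoint ε hε
  exact ⟨N, K, fun n hn k hk => Real.dist_eq _ _ ▸ hNK (n, k) ⟨hn, hk⟩⟩

/-- Joint-limit convergence of the squared generational distance: with `M` nonempty compact,
`P` a probability measure with `s(P) := E[dist(X,M)²] < ∞`, `(y i)` i.i.d. from `P`, and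
`(Z k)` nonempty finite subsets of `M` with `d_H(Z k, M) → 0`, almost surely
`GD²(Y_n, Z_k) = (1/n) ∑_{i<n} dist(y i, Z k)² → s(P)` in the joint limit `n, k → ∞`. -/
theorem stmt7 {m : ℕ} (M : Set (EuclideanSpace ℝ (Fin m))) (hM : IsCompact M)
    (hMne : M.Nonempty)
    {Ω : Type*} [MeasurableSpace Ω] (μ : Measure Ω) [IsProbabilityMeasure μ]
    (P : Measure (EuclideanSpace ℝ (Fin m))) [IsProbabilityMeasure P]
    (y : ℕ → Ω → EuclideanSpace ℝ (Fin m))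
    (hmeas : ∀ i, Measurable (y i))
    (hindep : ProbabilityTheory.iIndepFun y μ)
    (hlaw : ∀ i, Measure.map (y i) μ = P)
    (hint : Integrable (fun x => Metric.infDist x M ^ 2) P)
    (Z : ℕ → Set (EuclideanSpace ℝ (Fin m)))
    (hZsub : ∀ k, Z k ⊆ M) (hZfin : ∀ k, (Z k).Finite) (hZne : ∀ k, (Z k).Nonempty)
    (hconv : Tendsto (fun k => Metric.hausdorffDist (Z k) M) atTop (nhds 0)) :
    ∀ᵐ ω ∂μ, ∀ ε > 0, ∃ N K : ℕ, ∀ n ≥ N, ∀ k ≥ K,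
      |(1 / (n : ℝ)) * ∑ i ∈ Finset.range n, Metric.infDist (y i ω) (Z k) ^ 2
        - ∫ x, Metric.infDist x M ^ 2 ∂P| < ε :=
  stmt7_general M hM μ P y hmeas hindep hlaw hint Z hZsub hZne hconv
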